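/- Under the hypotheses of the context (the absorption probabilities s_k,…,s_n of the Markov chain M_k^2), if in addition k ≤ n/2, then s_k ≥ 1 − 256r/((r−5)(r−1)·n). -/

import Mathlib

/-!
Write `t_i = 1 - s_i` and `d_i = s_i - s_{i-1}`; the recurrence says `β_i d_i = γ_i t_i + α_i d_{i+1}`.
A downward induction from `t_{n+1} = 0` gives `t_i ≤ (n/r) d_i` for every `i > k`. Below the
midpoint of `k, …, n` one has `β_i ≤ (5/r) α_i`, so there the increments decay geometrically,
`d_{i+1} ≤ (5/r) d_i`. A second downward induction, started at the midpoint `k + M + 1` with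
`M ≈ n/4`, yields `t_k ≤ (1 + 5/(r-5) + (1 + n/r)(5/r)^M) d_{k+1}`; by Bernoulli's inequality the
bracket is `O(r/(r-5))`, and the hypothesis on `s_k` gives `d_{k+1} ≤ 2/(n(r-1))`.
-/

lemma balance_of_eq_div {a b c x y z : ℝ} (habc : a + b + c ≠ 0)
    (hx : x = (a * y + b * z + c) / (a + b + c)) :
    b * (x - z) = c * (1 - x) + a * (y - x) := by
  rw [eq_div_iff habc] at hx
  linear_combination hx

lemma le_mul_of_balance {a b c t d d' G : ℝ} (hbal : b * d = c * t + a * d')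
    (ht : 0 ≤ t) (ha : 0 ≤ a) (hb : 0 < b) (hG : 0 ≤ G) (ht' : t ≤ (1 + G) * d')
    (hcoef : b * (1 + G) ≤ (c * (1 + G) + a) * G) :
    t ≤ G * d := by
  have key : b * (1 + G) * t ≤ b * (1 + G) * (G * d) :=
    calc b * (1 + G) * t ≤ (c * (1 + G) + a) * G * t := by gcongr
      _ = G * (1 + G) * (c * t) + a * G * t := by ring
      _ ≤ G * (1 + G) * (c * t) + a * G * ((1 + G) * d') := by gcongr
      _ = b * (1 + G) * (G * d) := by rw [← sub_eq_zero]; linear_combination -(G * (1 + G)) * hbal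
  exact le_of_mul_le_mul_left key (by positivity)

lemma le_mul_of_balance_of_le_mul {a b c t d d' q : ℝ} (hbal : b * d = c * t + a * d')
    (hct : 0 ≤ c * t) (ha : 0 < a) (hd : 0 ≤ d) (hbq : b ≤ q * a) :
    d' ≤ q * d := by
  have key : a * d' ≤ a * (q * d) := by nlinarith
  exact le_of_mul_le_mul_left key ha

-- `q / (1 - q)` is the fixed point of `K ↦ q * (1 + K)`, which maps the coefficient at `i + 1`
-- to the one at `i`.
theorem one_sub_le_geometric {s : ℕ → ℝ} {q H : ℝ} (hq0 : 0 ≤ q) (hq1 : q < 1) (hH : 0 ≤ H)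
    (M : ℕ) : ∀ a, (∀ i, a ≤ i → i < a + M → s (i + 1) - s i ≤ q * (s i - s (i - 1))) →
      0 ≤ s (a + M) - s (a + M - 1) → 1 - s (a + M) ≤ H * (s (a + M) - s (a + M - 1)) →
      1 - s a ≤ (q / (1 - q) + (1 + H) * q ^ M) * (s a - s (a - 1)) := by
  induction M with
  | zero =>
    intro a _ hd hb
    simp only [add_zero, pow_zero] at *
    nlinarith [div_nonneg hq0 (sub_nonneg.2 hq1.le)]
  | succ M ih =>
    intro a hratio hd hb
    rw [← add_assoc, add_right_comm] at hd hb
    have hnext := ih (a + 1) (fun i h1 h2 => hratio i (by omega) (by omega)) hd hb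
    rw [Nat.add_sub_cancel] at hnext
    have hstep := hratio a le_rfl (by omega)
    have hK : 0 ≤ 1 + (q / (1 - q) + (1 + H) * q ^ M) := by
      have := div_nonneg hq0 (sub_nonneg.2 hq1.le)
      positivity
    calc 1 - s a = (1 - s (a + 1)) + (s (a + 1) - s a) := by ring
      _ ≤ (1 + (q / (1 - q) + (1 + H) * q ^ M)) * (s (a + 1) - s a) := by linarith
      _ ≤ (1 + (q / (1 - q) + (1 + H) * q ^ M)) * (q * (s a - s (a - 1))) := by gcongr
      _ = (q / (1 - q) + (1 + H) * q ^ (M + 1)) * (s a - s (a - 1)) := by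
        field_simp [(sub_pos.2 hq1).ne']
        ring

namespace UrchinChain

noncomputable def α (n : ℕ) (r : ℝ) (i : ℕ) : ℝ := r * i * ((n : ℝ) - i) / n

noncomputable def β (n k i : ℕ) : ℝ := (((i : ℝ) - k) * n + i * ((n : ℝ) - i)) / n

noncomputable def γ (n k : ℕ) (r : ℝ) (i : ℕ) : ℝ := r * ((i : ℝ) - k) / n

def SatisfiesRecurrence (n k : ℕ) (r : ℝ) (s : ℕ → ℝ) : Prop :=
  ∀ i, k + 1 ≤ i → i ≤ n →
    s i = (α n r i * s (i + 1) + β n k i * s (i - 1) + γ n k r i)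
      / (α n r i + β n k i + γ n k r i)

variable {n k i : ℕ} {r : ℝ} {s : ℕ → ℝ}

lemma α_nonneg (hr : 0 ≤ r) (hin : i ≤ n) : 0 ≤ α n r i := by
  have : (i : ℝ) ≤ n := by exact_mod_cast hin
  unfold α
  have : 0 ≤ (n : ℝ) - i := by linarith
  positivity

lemma α_pos (hr : 0 < r) (hi : 0 < i) (hin : i < n) : 0 < α n r i := by
  have : (i : ℝ) < n := by exact_mod_cast hin
  have : (0 : ℝ) < i := by exact_mod_cast hi
  have : (0 : ℝ) < n := by linarith
  unfold α
  have : 0 < (n : ℝ) - i := by linarith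
  positivity

lemma β_pos (hki : k < i) (hin : i ≤ n) : 0 < β n k i := by
  have : (k : ℝ) < i := by exact_mod_cast hki
  have : (i : ℝ) ≤ n := by exact_mod_cast hin
  have : (0 : ℝ) < n := by exact_mod_cast (show 0 < n by omega)
  unfold β
  have : 0 ≤ (i : ℝ) * ((n : ℝ) - i) := mul_nonneg (Nat.cast_nonneg i) (by linarith)
  have : 0 < ((i : ℝ) - k) * n := mul_pos (by linarith) (by positivity)
  exact div_pos (by linarith) (by positivity)

lemma γ_nonneg (hr : 0 ≤ r) (hki : k ≤ i) : 0 ≤ γ n k r i := by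
  have : (k : ℝ) ≤ i := by exact_mod_cast hki
  unfold γ
  have : 0 ≤ (i : ℝ) - k := by linarith
  positivity

lemma SatisfiesRecurrence.balance (hs : SatisfiesRecurrence n k r s) (hr : 0 ≤ r)
    (hki : k < i) (hin : i ≤ n) :
    β n k i * (s i - s (i - 1)) = γ n k r i * (1 - s i) + α n r i * (s (i + 1) - s i) :=
  balance_of_eq_div
    (by linarith [α_nonneg hr hin, β_pos hki hin, γ_nonneg (n := n) hr hki.le]) (hs i hki hin)

lemma β_mul_le (hn : 2 ≤ n) (hr : 2 ≤ r) (hin : i ≤ n) :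
    β n k i * (1 + n / r) ≤ (γ n k r i * (1 + n / r) + α n r i) * (n / r) := by
  have hdiff : (γ n k r i * (1 + n / r) + α n r i) * (n / r) - β n k i * (1 + n / r)
      = i * ((n : ℝ) - i) * (1 - 1 / n - 1 / r) := by
    unfold α β γ
    field_simp
    ring
  have : (2 : ℝ) ≤ n := by exact_mod_cast hn
  have : (i : ℝ) ≤ n := by exact_mod_cast hin
  have : 1 / (n : ℝ) ≤ 1 / 2 := by gcongr
  have : 1 / r ≤ 1 / 2 := by gcongr
  have : 0 ≤ i * ((n : ℝ) - i) * (1 - 1 / n - 1 / r) := by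
    apply mul_nonneg (mul_nonneg (Nat.cast_nonneg i) (by linarith)); linarith
  linarith

lemma β_le_mul_α (hr : 0 < r) (hki : k < i) (hin : i < n) (hmid : 2 * i ≤ n + k + 1) :
    β n k i ≤ 5 / r * α n r i := by
  have : (k : ℝ) + 1 ≤ i := by exact_mod_cast hki
  have : (i : ℝ) + 1 ≤ n := by exact_mod_cast hin
  have : 2 * (i : ℝ) ≤ n + k + 1 := by exact_mod_cast hmid
  have : (0 : ℝ) < n := by exact_mod_cast (show 0 < n by omega)
  have hcomb : ((i : ℝ) - k) * n ≤ 4 * (i * ((n : ℝ) - i)) := by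
    nlinarith [Nat.cast_nonneg (α := ℝ) k]
  unfold α β
  rw [show 5 / r * (r * i * ((n : ℝ) - i) / n) = 5 * (i * ((n : ℝ) - i)) / n by
    field_simp]
  gcongr
  linarith

theorem SatisfiesRecurrence.one_sub_le_div_mul_sub (hs : SatisfiesRecurrence n k r s)
    (hn : 2 ≤ n) (hr : 2 ≤ r) (hle : ∀ j, k ≤ j → j ≤ n → s j ≤ 1) (htop : s (n + 1) = 1)
    (hki : k < i) (hin : i ≤ n + 1) :
    1 - s i ≤ n / r * (s i - s (i - 1)) := by
  have hG : (0 : ℝ) ≤ n / r := by positivity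
  refine Nat.decreasingInduction' (P := fun j => 1 - s j ≤ n / r * (s j - s (j - 1)))
    (fun j hjn hij hnext => ?_) hin ?_
  · have hjn : j ≤ n := Nat.le_of_lt_succ hjn
    rw [Nat.add_sub_cancel] at hnext
    have hsj := hle j (by omega) hjn
    exact le_mul_of_balance (hs.balance (by linarith) (by omega) hjn) (by linarith)
      (α_nonneg (by linarith) hjn) (β_pos (by omega) hjn) hG (by linarith)
      (β_mul_le hn hr hjn)
  · rw [htop, Nat.add_sub_cancel]
    have := hle n (by omega) le_rfl
    nlinarith

lemma SatisfiesRecurrence.sub_le_mul_sub (hs : SatisfiesRecurrence n k r s) (hr : 0 < r)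
    (hki : k < i) (hin : i < n) (hmid : 2 * i ≤ n + k + 1) (hle : s i ≤ 1)
    (hmono : s (i - 1) ≤ s i) :
    s (i + 1) - s i ≤ 5 / r * (s i - s (i - 1)) :=
  le_mul_of_balance_of_le_mul (hs.balance hr.le hki hin.le)
    (mul_nonneg (γ_nonneg hr.le hki.le) (by linarith)) (α_pos hr (by omega) hin)
    (by linarith) (β_le_mul_α hr hki hin hmid)

end UrchinChain

lemma one_add_geometric_coeff_le {n M : ℕ} {r : ℝ} (hr : 5 < r) (hnM : n ≤ 4 * M + 4) :
    1 + (5 / r / (1 - 5 / r) + (1 + n / r) * (5 / r) ^ M) ≤ 128 * r / (r - 5) := by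
  have hr5 : 0 < r - 5 := by linarith
  have hq : 5 / r / (1 - 5 / r) = 5 / (r - 5) := by
    field_simp
  have hpow : (5 / r) ^ M ≤ 5 / (5 + M * (r - 5)) := by
    have hbern := one_add_mul_le_pow (show (-2 : ℝ) ≤ (r - 5) / 5 by linarith) M
    rw [show 5 / (5 + M * (r - 5)) = (1 + M * ((r - 5) / 5))⁻¹ by field_simp,
      show 5 / r = (1 + (r - 5) / 5)⁻¹ by field_simp; ring, inv_pow]
    gcongr
  have hnMR : (n : ℝ) ≤ 4 * M + 4 := by exact_mod_cast hnM
  have hM : (0 : ℝ) ≤ M := Nat.cast_nonneg M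
  have htail : (1 + n / r) * (5 / (5 + M * (r - 5))) ≤ 127 * r / (r - 5) := by
    rw [show (1 + n / r) * (5 / (5 + M * (r - 5))) = 5 * (r + n) / (r * (5 + M * (r - 5))) by
      field_simp, div_le_div_iff₀ (by positivity) hr5]
    nlinarith [mul_nonneg hM hr5.le, mul_nonneg (mul_nonneg hM hr5.le) hr5.le]
  calc 1 + (5 / r / (1 - 5 / r) + (1 + n / r) * (5 / r) ^ M)
      ≤ 1 + (5 / (r - 5) + 127 * r / (r - 5)) := by
        rw [hq]; gcongr; exact (mul_le_mul_of_nonneg_left hpow (by positivity)).trans htail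
    _ = 128 * r / (r - 5) := by field_simp; ring

theorem sk_lower_bound_half_general (n k : ℕ) (hn : 2 ≤ n)
    (r : ℝ) (hr : 5 < r) (s : ℕ → ℝ)
    (hbound : ∀ i, k ≤ i → i ≤ n + 1 → 0 ≤ s i ∧ s i ≤ 1)
    (htop : s (n + 1) = 1)
    (hmono : ∀ i, k ≤ i → i < n → s i ≤ s (i + 1))
    (hfirst : s k ≥ (1 - 2 / ((n : ℝ) * (r - 1))) * s (k + 1))
    (hrec : ∀ i, k + 1 ≤ i → i ≤ n →
      s i = (r * i * ((n : ℝ) - i) / n * s (i + 1)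
              + ((((i : ℝ) - k) * n + i * ((n : ℝ) - i)) / n) * s (i - 1)
              + r * ((i : ℝ) - k) / n)
        / (r * i * ((n : ℝ) - i) / n
              + (((i : ℝ) - k) * n + i * ((n : ℝ) - i)) / n
              + r * ((i : ℝ) - k) / n))
    (hhalf : (k : ℝ) ≤ (n : ℝ) / 2) :
    s k ≥ 1 - 256 * r / ((r - 5) * (r - 1) * n) := by
  have hs : UrchinChain.SatisfiesRecurrence n k r s := hrec
  have h2k : 2 * k ≤ n := by
    have : ((2 * k : ℕ) : ℝ) ≤ n := by push_cast; linarith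
    exact_mod_cast this
  have hle : ∀ i, k ≤ i → i ≤ n → s i ≤ 1 := fun i hki hin => (hbound i hki (by omega)).2
  have hmono' : ∀ i, k < i → i ≤ n → s (i - 1) ≤ s i := fun i hki hin => by
    simpa [Nat.sub_add_cancel (by omega : 1 ≤ i)] using hmono (i - 1) (by omega) (by omega)
  set M := (n - k - 1) / 2
  have hfar := hs.one_sub_le_div_mul_sub hn (by linarith) hle htop
    (i := k + 1 + M) (by omega) (by omega)
  have hnear := one_sub_le_geometric (q := 5 / r) (by positivity)
    (by rw [div_lt_one (by linarith)]; linarith) (by positivity) M (k + 1)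
    (fun i hki hiM => hs.sub_le_mul_sub (by linarith) (by omega) (by omega) (by omega)
      (hle i (by omega) (by omega)) (hmono' i (by omega) (by omega)))
    (sub_nonneg.2 (hmono' _ (by omega) (by omega))) hfar
  rw [Nat.add_sub_cancel] at hnear
  have hjump : s (k + 1) - s k ≤ 2 / (n * (r - 1)) := by
    have hε : 0 ≤ 2 / ((n : ℝ) * (r - 1)) := div_nonneg (by norm_num) (by nlinarith)
    nlinarith [hle (k + 1) (by omega) (by omega)]
  rw [ge_iff_le, sub_le_comm]
  calc 1 - s k = (1 - s (k + 1)) + (s (k + 1) - s k) := by ring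
    _ ≤ (1 + (5 / r / (1 - 5 / r) + (1 + n / r) * (5 / r) ^ M)) * (s (k + 1) - s k) := by
      linarith
    _ ≤ 128 * r / (r - 5) * (2 / (n * (r - 1))) := by
      gcongr
      · linarith [hmono k le_rfl (by omega)]
      · exact one_add_geometric_coeff_le hr (by omega)
    _ = 256 * r / ((r - 5) * (r - 1) * n) := by
      field_simp
      ring

/-- If moreover `k ≤ n/2`, then `s_k ≥ 1 - 256r/((r-5)(r-1)·n)` for the absorption
probabilities of the Markov chain `M_k^2`. -/
theorem sk_lower_bound_half (n k : ℕ) (hn : 2 ≤ n) (hk1 : 1 ≤ k) (hk2 : k ≤ n - 1)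
    (r : ℝ) (hr : 5 < r) (s : ℕ → ℝ)
    (hbound : ∀ i, k ≤ i → i ≤ n + 1 → 0 ≤ s i ∧ s i ≤ 1)
    (htop : s (n + 1) = 1)
    (hmono : ∀ i, k ≤ i → i < n → s i ≤ s (i + 1))
    (hfirst : s k ≥ (1 - 2 / ((n : ℝ) * (r - 1))) * s (k + 1))
    (hrec : ∀ i, k + 1 ≤ i → i ≤ n →
      s i = (r * i * ((n : ℝ) - i) / n * s (i + 1)
              + ((((i : ℝ) - k) * n + i * ((n : ℝ) - i)) / n) * s (i - 1)
              + r * ((i : ℝ) - k) / n)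
        / (r * i * ((n : ℝ) - i) / n
              + (((i : ℝ) - k) * n + i * ((n : ℝ) - i)) / n
              + r * ((i : ℝ) - k) / n))
    (hhalf : (k : ℝ) ≤ (n : ℝ) / 2) :
    s k ≥ 1 - 256 * r / ((r - 5) * (r - 1) * n) :=
  sk_lower_bound_half_general n k hn r hr s hbound htop hmono hfirst hrec hhalf
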